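/- Let d ≥ c ≥ 2, and let X be an edge-signed (c,d)-biregular bipartite graph with m constraint vertices of degree c, n variable vertices of degree d, e = cm = dn edges, and signed incidence matrix N ∈ ℝ^{m×n}. Let B be the 2e × 2e signed non-backtracking matrix of X. Then the characteristic polynomial of B factors as det(x·I_{2e} − B) = (x² − 1)^{e−m−n} · (x² + (c−1))^{m−n} · det( (x⁴ + (c+d−2)·x² + (c−1)(d−1))·I_n − x²·NᵀN ). In particular, B has eigenvalues ±1 with multiplicity e−(m+n) each, ±i√(c−1) with multiplicity m−n each, and for each eigenvalue λ² of NᵀN the four roots of u⁴ + ((c−1)+(d−1)−λ²)u² + (c−1)(d−1). -/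

import Mathlib

/-!
Write `B = P Qᵀ - J`, where `Q` is the tail incidence matrix of the arcs, `P` the signed head
incidence matrix and `J` the signed reversal of arcs, so that `J² = 1` and `J P = Q`. Then
`(t - J)(t - B) = (t² - 1) - (t P - Q) Qᵀ` and `det (t - J) = (t² - 1)^e`, and the
Weinstein–Aronszajn identity moves the determinant to the vertex space, where
`Qᵀ (t P - Q) = t A - D` with `A` the signed bipartite adjacency matrix and `D = diag(c, d)`.
A Schur complement of the resulting `2 × 2` block matrix leaves
`det ((t² - 1 + c)(t² - 1 + d) - t² NᵀN)`. All cancellations take place in the domain `ℤ[X]`.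
-/

open scoped Matrix

/-- The signed non-backtracking matrix of an edge-signed `(c,d)`-biregular bipartite
graph with signed incidence matrix `N` (rows = constraint vertices, columns =
variable vertices).  Directed edges: `Sum.inl e` is the arc from constraint `e.1`
to variable `e.2`, and `Sum.inr e` is the arc from variable `e.2` to constraint
`e.1`; both carry the sign `N e.1 e.2`. -/
def signedNB {m n : ℕ} (N : Matrix (Fin m) (Fin n) ℤ) :
    Matrix ({p : Fin m × Fin n // N p.1 p.2 ≠ 0} ⊕ {p : Fin m × Fin n // N p.1 p.2 ≠ 0})
      ({p : Fin m × Fin n // N p.1 p.2 ≠ 0} ⊕ {p : Fin m × Fin n // N p.1 p.2 ≠ 0}) ℤ :=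
  fun e f =>
  match e, f with
  | Sum.inl e, Sum.inr f =>
      if f.val.2 = e.val.2 ∧ f.val.1 ≠ e.val.1 then N e.val.1 e.val.2 else 0
  | Sum.inr e, Sum.inl f =>
      if f.val.1 = e.val.1 ∧ f.val.2 ≠ e.val.2 then N e.val.1 e.val.2 else 0
  | _, _ => 0

open Matrix Polynomial Finset

section LinearAlgebra

variable {R : Type*} [CommRing R] {ι κ : Type*} [Fintype ι] [Fintype κ] [DecidableEq ι]

theorem pow_card_mul_det_fromBlocks_smul_one [DecidableEq κ] (s : R) (B : Matrix ι κ R)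
    (C : Matrix κ ι R) (D : Matrix κ κ R) :
    s ^ Fintype.card κ * (fromBlocks (s • 1) B C D).det
      = s ^ Fintype.card ι * (s • D - C * B).det := by
  have h : fromBlocks (s • 1) B C D * fromBlocks 1 (-B) 0 (s • 1)
      = fromBlocks (s • 1) 0 C (s • D - C * B) := by
    simp only [fromBlocks_multiply, Matrix.mul_one, Matrix.mul_zero, add_zero, Matrix.mul_neg,
      Matrix.smul_mul, Matrix.one_mul, Matrix.mul_smul, neg_add_cancel]
    congr 1; abel
  have := congrArg det h
  rw [det_mul, det_fromBlocks_zero₂₁, det_fromBlocks_zero₁₂, det_smul, det_smul, det_one,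
    det_one] at this
  linear_combination this

theorem pow_card_mul_det_smul_one_sub_mul_comm [DecidableEq κ] (s : R) (U : Matrix ι κ R)
    (V : Matrix κ ι R) :
    s ^ Fintype.card κ * (s • 1 - U * V).det = s ^ Fintype.card ι * (s • 1 - V * U).det := by
  rw [← pow_card_mul_det_fromBlocks_smul_one, det_fromBlocks_one₂₂]

theorem pow_card_mul_det_fromBlocks_smul_one_neg_smul [DecidableEq κ] (a b t : R)
    (M : Matrix κ ι R) :
    a ^ Fintype.card ι * (fromBlocks (a • 1) (-(t • M)) (-(t • Mᵀ)) (b • 1)).det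
      = a ^ Fintype.card κ * ((a * b) • 1 - t ^ 2 • (Mᵀ * M)).det := by
  rw [pow_card_mul_det_fromBlocks_smul_one, Matrix.neg_mul, Matrix.mul_neg, neg_neg,
    Matrix.smul_mul, Matrix.mul_smul, smul_smul, smul_smul, sq]

theorem det_smul_one_sub_mul_det_smul_one_sub_mul_transpose_sub (t : R) {J : Matrix ι ι R}
    {P Q : Matrix ι κ R} (hJ : J * J = 1) (hJP : J * P = Q) :
    (t • 1 - J).det * (t • 1 - (P * Qᵀ - J)).det = ((t ^ 2 - 1) • 1 - (t • P - Q) * Qᵀ).det := by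
  rw [← det_mul]
  congr 1
  simp only [Matrix.sub_mul, Matrix.mul_sub, Matrix.smul_mul, Matrix.mul_smul, Matrix.one_mul,
    Matrix.mul_one, ← Matrix.mul_assoc, hJ, hJP]
  module

theorem charpoly_fromBlocks_zero_of_mul_self_eq_one {S : Matrix ι ι R} (hS : S * S = 1) :
    (fromBlocks 0 S S 0).charpoly = (X ^ 2 - 1) ^ Fintype.card ι := by
  -- the Schur complement formula holds after multiplying by the non-zero-divisor `X ^ card ι`
  refine (isRegular_X_pow (Fintype.card ι)).left (?_ : X ^ _ * _ = X ^ _ * _)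
  have hS' : -S.map C * -S.map C = (1 : Matrix ι ι R[X]) := by
    rw [neg_mul_neg, ← Matrix.map_mul, hS, Matrix.map_one _ C.map_zero C.map_one]
  rw [charpoly, charmatrix_fromBlocks, charmatrix_zero, scalar_apply, ← smul_one_eq_diagonal,
    pow_card_mul_det_fromBlocks_smul_one, hS',
    show X • X • (1 : Matrix ι ι R[X]) - 1 = ((X : R[X]) ^ 2 - 1) • 1 by module, det_smul,
    det_one, mul_one]

theorem det_smul_one_sub_fromBlocks_zero (t : R) {S : Matrix ι ι R} (hS : S * S = 1) :
    (t • 1 - fromBlocks 0 S S 0).det = (t ^ 2 - 1) ^ Fintype.card ι := by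
  rw [smul_one_eq_diagonal, ← scalar_apply, ← eval_charpoly,
    charpoly_fromBlocks_zero_of_mul_self_eq_one hS]
  simp

end LinearAlgebra

theorem X_sq_sub_one_ne_zero {R : Type*} [Ring R] [Nontrivial R] : (X ^ 2 - 1 : R[X]) ≠ 0 := by
  simpa using X_pow_sub_C_ne_zero two_pos (1 : R)

theorem coe_C_eq_intCast : ((C : ℤ →+* ℤ[X]) : ℤ → ℤ[X]) = Int.cast :=
  funext C_eq_intCast

namespace SignedNB

variable {m n : ℕ} (N : Matrix (Fin m) (Fin n) ℤ)

abbrev Edge : Type := {p : Fin m × Fin n // N p.1 p.2 ≠ 0}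

def sign (e : Edge N) : ℤ := N e.1.1 e.1.2

abbrev head : Edge N ⊕ Edge N → Fin m ⊕ Fin n :=
  Sum.elim (fun e => .inr e.1.2) (fun e => .inl e.1.1)

abbrev tail : Edge N ⊕ Edge N → Fin m ⊕ Fin n :=
  Sum.elim (fun e => .inl e.1.1) (fun e => .inr e.1.2)

variable (R : Type*) [CommRing R]

def signedHeadIncidence : Matrix (Edge N ⊕ Edge N) (Fin m ⊕ Fin n) R :=
  of fun a w => if head N a = w then ((Sum.elim (sign N) (sign N) a : ℤ) : R) else 0

def tailIncidence : Matrix (Edge N ⊕ Edge N) (Fin m ⊕ Fin n) R :=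
  of fun a w => if tail N a = w then 1 else 0

def edgeSign : Matrix (Edge N) (Edge N) R := diagonal fun e => (sign N e : R)

def signedReversal : Matrix (Edge N ⊕ Edge N) (Edge N ⊕ Edge N) R :=
  fromBlocks 0 (edgeSign N R) (edgeSign N R) 0

variable {N R}

theorem sum_edge_eq_sum {f : Fin m × Fin n → R} (hf : ∀ p, N p.1 p.2 = 0 → f p = 0) :
    ∑ e : Edge N, f e.1 = ∑ p, f p := by
  rw [← Finset.sum_subtype (Finset.univ.filter fun p : Fin m × Fin n => N p.1 p.2 ≠ 0) (by simp) f]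
  exact Finset.sum_subset (Finset.filter_subset _ _) fun p _ hp => hf p (by simpa using hp)

theorem card_edge_fst_eq (i : Fin m) :
    #{e : Edge N | e.1.1 = i} = #{j | N i j ≠ 0} := by
  refine Finset.card_bij (fun e _ => e.1.2) ?_ ?_ ?_
  · rintro ⟨⟨i', j⟩, h⟩ hi
    simp only [mem_filter, mem_univ, true_and] at hi ⊢
    exact hi ▸ h
  · rintro ⟨⟨i₁, j₁⟩, h₁⟩ hi₁ ⟨⟨i₂, j₂⟩, h₂⟩ hi₂ hj
    simp only [mem_filter, mem_univ, true_and] at hi₁ hi₂ hj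
    subst hi₁ hi₂ hj
    rfl
  · intro j hj
    exact ⟨⟨(i, j), by simpa using hj⟩, by simp, rfl⟩

theorem card_edge_snd_eq (j : Fin n) :
    #{e : Edge N | e.1.2 = j} = #{i | N i j ≠ 0} := by
  refine Finset.card_bij (fun e _ => e.1.1) ?_ ?_ ?_
  · rintro ⟨⟨i, j'⟩, h⟩ hj
    simp only [mem_filter, mem_univ, true_and] at hj ⊢
    exact hj ▸ h
  · rintro ⟨⟨i₁, j₁⟩, h₁⟩ hj₁ ⟨⟨i₂, j₂⟩, h₂⟩ hj₂ hi
    simp only [mem_filter, mem_univ, true_and] at hj₁ hj₂ hi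
    subst hj₁ hj₂ hi
    rfl
  · intro i hi
    exact ⟨⟨(i, j), by simpa using hi⟩, by simp, rfl⟩

theorem signedNB_map_intCast :
    (signedNB N).map (Int.cast : ℤ → R)
      = signedHeadIncidence N R * (tailIncidence N R)ᵀ - signedReversal N R := by
  ext (e | e) (f | f) <;>
    simp [signedNB, signedHeadIncidence, tailIncidence, signedReversal, edgeSign, mul_apply, sign]
  all_goals
    rcases eq_or_ne e f with rfl | hef
    · simp
    · simp [diagonal_apply_ne _ hef]
      grind [Subtype.ext_iff, Prod.ext_iff]

theorem intCast_sign_mul_self (hN : ∀ e : Edge N, sign N e * sign N e = 1) (e : Edge N) :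
    (sign N e : R) * sign N e = 1 := by
  rw [← Int.cast_mul, hN e, Int.cast_one]

theorem edgeSign_mul_self (hN : ∀ e : Edge N, sign N e * sign N e = 1) :
    edgeSign N R * edgeSign N R = 1 := by
  simp [edgeSign, intCast_sign_mul_self (R := R) hN]

theorem signedReversal_mul_self (hN : ∀ e : Edge N, sign N e * sign N e = 1) :
    signedReversal N R * signedReversal N R = 1 := by
  simp [signedReversal, fromBlocks_multiply, edgeSign_mul_self hN]

theorem signedReversal_mul_signedHeadIncidence (hN : ∀ e : Edge N, sign N e * sign N e = 1) :
    signedReversal N R * signedHeadIncidence N R = tailIncidence N R := by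
  ext (e | e) w <;>
    simp only [signedReversal, edgeSign, mul_apply, Fintype.sum_sum_type, fromBlocks_apply₁₁,
      fromBlocks_apply₁₂, fromBlocks_apply₂₁, fromBlocks_apply₂₂, Matrix.zero_apply, zero_mul,
      Finset.sum_const_zero, zero_add, add_zero, diagonal_apply, ite_mul, Finset.sum_ite_eq,
      Finset.mem_univ, if_true] <;>
    simp only [signedHeadIncidence, tailIncidence, of_apply, Sum.elim_inl, Sum.elim_inr] <;>
    split_ifs with h <;> simp [h, intCast_sign_mul_self (R := R) hN]

theorem tailIncidence_transpose_mul_signedHeadIncidence :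
    (tailIncidence N R)ᵀ * signedHeadIncidence N R
      = fromBlocks 0 (N.map Int.cast) (N.map Int.cast)ᵀ 0 := by
  ext (i | j) (i' | j') <;> simp [signedHeadIncidence, tailIncidence, mul_apply, sign]
  · rw [sum_edge_eq_sum
      (f := fun p => if p.2 = j' then if p.1 = i then (N p.1 p.2 : R) else 0 else 0)
      (by intro p hp; simp [hp])]
    simp [Fintype.sum_prod_type]
  · rw [sum_edge_eq_sum
      (f := fun p => if p.1 = i' then if p.2 = j then (N p.1 p.2 : R) else 0 else 0)
      (by intro p hp; simp [hp])]
    simp [Fintype.sum_prod_type]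

theorem tailIncidence_transpose_mul_self {c d : ℕ}
    (hrow : ∀ i, (Finset.univ.filter fun j => N i j ≠ 0).card = c)
    (hcol : ∀ j, (Finset.univ.filter fun i => N i j ≠ 0).card = d) :
    (tailIncidence N R)ᵀ * tailIncidence N R = fromBlocks ((c : R) • 1) 0 0 ((d : R) • 1) := by
  ext (i | j) (i' | j') <;>
    simp only [tailIncidence, transpose_apply, mul_apply, of_apply, Fintype.sum_sum_type,
      Sum.elim_inl, Sum.elim_inr, ← ite_and, Sum.inl.injEq, Sum.inr.injEq, reduceCtorEq,
      and_false, false_and, if_false, Finset.sum_const_zero, add_zero, zero_add,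
      fromBlocks_apply₁₁, fromBlocks_apply₁₂, fromBlocks_apply₂₁, fromBlocks_apply₂₂,
      Matrix.zero_apply, Matrix.smul_apply, one_apply, smul_eq_mul, mul_ite, mul_one, mul_zero]
  · split_ifs with h
    · subst h
      simp only [and_self, Finset.sum_boole, card_edge_fst_eq, hrow]
    · exact Finset.sum_eq_zero fun x _ => if_neg fun hx => h (hx.2.symm.trans hx.1)
  · split_ifs with h
    · subst h
      simp only [and_self, Finset.sum_boole, card_edge_snd_eq, hcol]
    · exact Finset.sum_eq_zero fun x _ => if_neg fun hx => h (hx.2.symm.trans hx.1)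

theorem card_edge {c : ℕ} (hrow : ∀ i, (Finset.univ.filter fun j => N i j ≠ 0).card = c) :
    Fintype.card (Edge N) = c * m := by
  rw [← Finset.card_univ, Finset.card_eq_sum_card_fiberwise (f := fun e => e.1.1) (t := univ)
    (by simp)]
  simp [card_edge_fst_eq, hrow, mul_comm]

theorem smul_one_sub_tailIncidence_transpose_mul {c d : ℕ}
    (hrow : ∀ i, (Finset.univ.filter fun j => N i j ≠ 0).card = c)
    (hcol : ∀ j, (Finset.univ.filter fun i => N i j ≠ 0).card = d) (t : R) :
    (t ^ 2 - 1) • 1 - (tailIncidence N R)ᵀ * (t • signedHeadIncidence N R - tailIncidence N R)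
      = fromBlocks ((t ^ 2 - 1 + c) • 1) (-(t • N.map Int.cast)) (-(t • (N.map Int.cast)ᵀ))
          ((t ^ 2 - 1 + d) • 1) := by
  rw [Matrix.mul_sub, Matrix.mul_smul, tailIncidence_transpose_mul_signedHeadIncidence,
    tailIncidence_transpose_mul_self hrow hcol, ← fromBlocks_one]
  simp only [fromBlocks_smul, sub_eq_add_neg, fromBlocks_neg, fromBlocks_add]
  congr 1 <;> module

theorem pow_mul_charpoly_signedNB {c d : ℕ} (hN : ∀ e : Edge N, sign N e * sign N e = 1)
    (hrow : ∀ i, (Finset.univ.filter fun j => N i j ≠ 0).card = c)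
    (hcol : ∀ j, (Finset.univ.filter fun i => N i j ≠ 0).card = d) :
    (X ^ 2 - 1 : ℤ[X]) ^ (m + n) * (signedNB N).charpoly
      = (X ^ 2 - 1) ^ (c * m)
        * (fromBlocks ((X ^ 2 - 1 + (c : ℤ[X])) • (1 : Matrix (Fin m) (Fin m) ℤ[X]))
          (-((X : ℤ[X]) • N.map Int.cast)) (-((X : ℤ[X]) • (N.map Int.cast)ᵀ))
          ((X ^ 2 - 1 + (d : ℤ[X])) • (1 : Matrix (Fin n) (Fin n) ℤ[X]))).det := by
  have hcharpoly : (signedNB N).charpoly = ((X : ℤ[X]) • 1 - (signedHeadIncidence N ℤ[X] *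
      (tailIncidence N ℤ[X])ᵀ - signedReversal N ℤ[X])).det := by
    rw [← signedNB_map_intCast, charpoly, charmatrix, scalar_apply, ← smul_one_eq_diagonal,
      RingHom.mapMatrix_apply, coe_C_eq_intCast]
  have hfactor := det_smul_one_sub_mul_det_smul_one_sub_mul_transpose_sub (X : ℤ[X])
    (signedReversal_mul_self hN) (signedReversal_mul_signedHeadIncidence hN)
  rw [signedReversal, det_smul_one_sub_fromBlocks_zero (X : ℤ[X]) (edgeSign_mul_self hN),
    card_edge hrow, ← signedReversal, ← hcharpoly] at hfactor
  have hsylvester := pow_card_mul_det_smul_one_sub_mul_comm (X ^ 2 - 1 : ℤ[X])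
    ((X : ℤ[X]) • signedHeadIncidence N ℤ[X] - tailIncidence N ℤ[X]) (tailIncidence N ℤ[X])ᵀ
  simp only [Fintype.card_sum, Fintype.card_fin, card_edge hrow] at hsylvester
  refine mul_left_cancel₀ (pow_ne_zero (c * m) X_sq_sub_one_ne_zero) ?_
  rw [← smul_one_sub_tailIncidence_transpose_mul hrow hcol]
  linear_combination (X ^ 2 - 1 : ℤ[X]) ^ (m + n) * hfactor + hsylvester

theorem pow_mul_pow_mul_charpoly_signedNB {c d : ℕ} (hN : ∀ e : Edge N, sign N e * sign N e = 1)
    (hrow : ∀ i, (Finset.univ.filter fun j => N i j ≠ 0).card = c)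
    (hcol : ∀ j, (Finset.univ.filter fun i => N i j ≠ 0).card = d) :
    (X ^ 2 - 1 : ℤ[X]) ^ (m + n) * (X ^ 2 - 1 + (c : ℤ[X])) ^ n * (signedNB N).charpoly
      = (X ^ 2 - 1) ^ (c * m) * (X ^ 2 - 1 + (c : ℤ[X])) ^ m
        * (((X ^ 2 - 1 + (c : ℤ[X])) * (X ^ 2 - 1 + (d : ℤ[X]))) • 1
          - (X ^ 2 : ℤ[X]) • (Nᵀ * N).map C).det := by
  have hschur := pow_card_mul_det_fromBlocks_smul_one_neg_smul (X ^ 2 - 1 + (c : ℤ[X]))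
    (X ^ 2 - 1 + (d : ℤ[X])) X (N.map Int.cast)
  rw [Fintype.card_fin, Fintype.card_fin] at hschur
  rw [Matrix.map_mul, transpose_map, coe_C_eq_intCast]
  linear_combination (X ^ 2 - 1 + (c : ℤ[X])) ^ n * pow_mul_charpoly_signedNB hN hrow hcol
    + (X ^ 2 - 1 : ℤ[X]) ^ (c * m) * hschur

end SignedNB

open SignedNB

theorem stmt_5_general (c d m n : ℕ) (hc : 2 ≤ c) (hcd : c ≤ d)
    (hbal : c * m = d * n)
    (N : Matrix (Fin m) (Fin n) ℤ)
    (hentries : ∀ i j, N i j = -1 ∨ N i j = 0 ∨ N i j = 1)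
    (hrow : ∀ i, (Finset.univ.filter fun j => N i j ≠ 0).card = c)
    (hcol : ∀ j, (Finset.univ.filter fun i => N i j ≠ 0).card = d) :
    (signedNB N).charpoly
      = (Polynomial.X ^ 2 - 1) ^ (c * m - m - n)
          * (Polynomial.X ^ 2 + Polynomial.C ((c : ℤ) - 1)) ^ (m - n)
          * Matrix.det
              ((Polynomial.X ^ 4 + Polynomial.C ((c : ℤ) + d - 2) * Polynomial.X ^ 2
                  + Polynomial.C (((c : ℤ) - 1) * ((d : ℤ) - 1)))
                  • (1 : Matrix (Fin n) (Fin n) (Polynomial ℤ))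
                - (Polynomial.X ^ 2 : Polynomial ℤ) • (Nᵀ * N).map Polynomial.C) := by
  have hN : ∀ e : Edge N, sign N e * sign N e = 1 := fun e => by
    rcases hentries e.1.1 e.1.2 with h | h | h
    · simp [sign, h]
    · exact absurd h e.2
    · simp [sign, h]
  have hnm : n ≤ m := by nlinarith
  have hmn : m + n ≤ c * m := by nlinarith
  obtain ⟨k, hk⟩ : ∃ k, c * m = k + (m + n) := ⟨c * m - (m + n), by omega⟩
  have hα : (X ^ 2 + C ((c : ℤ) - 1) : ℤ[X]) = X ^ 2 - 1 + (c : ℤ[X]) := by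
    simp only [C_sub, C_1, map_natCast]; ring
  have hquartic : X ^ 4 + C ((c : ℤ) + d - 2) * X ^ 2 + C (((c : ℤ) - 1) * ((d : ℤ) - 1))
      = (X ^ 2 - 1 + (c : ℤ[X])) * (X ^ 2 - 1 + (d : ℤ[X])) := by
    simp only [C_sub, C_add, C_mul, C_1, map_natCast, C_ofNat]; ring
  have hα0 : (X ^ 2 - 1 + (c : ℤ[X])) ≠ 0 := hα ▸ (monic_X_pow_add_C _ two_ne_zero).ne_zero
  have key := pow_mul_pow_mul_charpoly_signedNB hN hrow hcol
  rw [hk, pow_add _ k, ← pow_sub_mul_pow (X ^ 2 - 1 + (c : ℤ[X])) hnm] at key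
  rw [show c * m - m - n = k by omega, hα, hquartic]
  refine mul_left_cancel₀
    (mul_ne_zero (pow_ne_zero (m + n) X_sq_sub_one_ne_zero) (pow_ne_zero n hα0)) ?_
  linear_combination key

/-- For an edge-signed `(c,d)`-biregular bipartite graph (`d ≥ c ≥ 2`) with `m`
constraint vertices, `n` variable vertices and `e = cm = dn` edges, the
characteristic polynomial of the signed non-backtracking matrix `B` factors as
`(X²-1)^(e-m-n) · (X²+(c-1))^(m-n) · det((X⁴+(c+d-2)X²+(c-1)(d-1))·1 - X²·NᵀN)`. -/
theorem stmt_5 (c d m n : ℕ) (hc : 2 ≤ c) (hcd : c ≤ d) (hm : 1 ≤ m) (hn : 1 ≤ n)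
    (hbal : c * m = d * n)
    (N : Matrix (Fin m) (Fin n) ℤ)
    (hentries : ∀ i j, N i j = -1 ∨ N i j = 0 ∨ N i j = 1)
    (hrow : ∀ i, (Finset.univ.filter fun j => N i j ≠ 0).card = c)
    (hcol : ∀ j, (Finset.univ.filter fun i => N i j ≠ 0).card = d) :
    (signedNB N).charpoly
      = (Polynomial.X ^ 2 - 1) ^ (c * m - m - n)
          * (Polynomial.X ^ 2 + Polynomial.C ((c : ℤ) - 1)) ^ (m - n)
          * Matrix.det
              ((Polynomial.X ^ 4 + Polynomial.C ((c : ℤ) + d - 2) * Polynomial.X ^ 2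
                  + Polynomial.C (((c : ℤ) - 1) * ((d : ℤ) - 1)))
                  • (1 : Matrix (Fin n) (Fin n) (Polynomial ℤ))
                - (Polynomial.X ^ 2 : Polynomial ℤ) • (Nᵀ * N).map Polynomial.C) :=
  stmt_5_general c d m n hc hcd hbal N hentries hrow hcol
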